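/- Let G be a finite connected k-regular simple graph with n vertices and m edges, where k ≥ 2. If λ_A ∈ ℝ is an eigenvalue of the adjacency matrix A(G) and λ ∈ ℂ satisfies λ² − λ_A·λ + k − 1 = 0, then λ is an eigenvalue of U⁺ over ℂ. (Backward direction of Theorem 5.1.) -/

import Mathlib

/-!
Let `A x = a x` with `x ≠ 0`, and write `o f`, `t f` for the endpoints of a dart `f`. Since
`k ≥ 2`, `(U⁺ y) e = ∑_{t f = o e} y f - y e⁻¹`. For `y f = x (t f) - λ x (o f)` this gives
`(k - 1 - λ a) x (o e) + λ x (t e) = λ y e`, using `λ² - a λ + k - 1 = 0`.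
If this `y` vanishes, then `x (t f) = λ x (o f)` along every dart with `λ ≠ 0`, so `x` has no
zeros on the connected graph. As the minimum degree is at least `2`, the graph has a cycle, whose
signed dart-count is a nonzero circulation `z`; then `f ↦ x (o f) z f` is a `λ`-eigenvector.
-/

open Matrix SimpleGraph Polynomial

/-- The transition matrix `U` (over `ℝ`) of the discrete-time quantum walk on `G`, indexed
by darts: `U e f = 2 / deg (t f)` if `t f = o e` and `f ≠ e⁻¹`, `U e f = 2 / deg (t f) - 1`
if `f = e⁻¹`, and `0` otherwise. -/
noncomputable def quantumUR {V : Type*} [Fintype V] (G : SimpleGraph V)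
    [DecidableRel G.Adj] [DecidableEq V] : Matrix G.Dart G.Dart ℝ :=
  fun e f =>
    if f.toProd.2 = e.toProd.1 ∧ f ≠ e.symm then (2 : ℝ) / (G.degree f.toProd.2 : ℝ)
    else if f = e.symm then (2 : ℝ) / (G.degree f.toProd.2 : ℝ) - 1
    else 0

/-- The positive support of a real matrix, viewed as a matrix over a semiring `R`:
entry `1` where the original entry is positive, `0` otherwise. -/
noncomputable def posSupport {α : Type*} (R : Type*) [Zero R] [One R]
    (F : Matrix α α ℝ) : Matrix α α R :=
  fun i j => if 0 < F i j then 1 else 0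

open Finset

namespace Matrix

variable {n K : Type*} [Fintype n] [DecidableEq n] [Field K] {M : Matrix n n K} {μ : K}

lemma mem_spectrum_of_mulVec_eq_smul {v : n → K} (hv : v ≠ 0) (h : M *ᵥ v = μ • v) :
    μ ∈ spectrum K M := by
  rw [← spectrum_toLin']
  exact (Module.End.hasEigenvalue_of_hasEigenvector (x := v) (Module.End.hasEigenvector_iff.mpr
    ⟨Module.End.mem_eigenspace_iff.mpr (by simpa), hv⟩)).mem_spectrum

lemma exists_mulVec_eq_smul_of_mem_spectrum (hμ : μ ∈ spectrum K M) :
    ∃ v : n → K, v ≠ 0 ∧ M *ᵥ v = μ • v := by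
  rw [← spectrum_toLin', ← Module.End.hasEigenvalue_iff_mem_spectrum] at hμ
  obtain ⟨v, hv⟩ := hμ.exists_hasEigenvector
  obtain ⟨hvμ, hv0⟩ := Module.End.hasEigenvector_iff.mp hv
  exact ⟨v, hv0, by simpa using Module.End.mem_eigenspace_iff.mp hvμ⟩

end Matrix

lemma Finset.sum_filter_univ_count_eq_countP {α : Type*} [Fintype α] [DecidableEq α]
    (p : α → Prop) [DecidablePred p] (l : List α) :
    ∑ x with p x, l.count x = l.countP p := by
  rw [← Finset.sum_filter_count_eq_countP]
  refine (Finset.sum_subset (filter_subset_filter _ (subset_univ _)) fun x hx hxl => ?_).symm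
  simp only [mem_filter, List.mem_toFinset] at hx hxl
  exact List.count_eq_zero.mpr fun hmem => hxl ⟨hmem, hx.2⟩

namespace SimpleGraph

variable {V : Type*} {G : SimpleGraph V}

lemma Walk.map_fst_darts_perm_map_snd_darts {v : V} (c : G.Walk v v) :
    (c.darts.map (·.fst)).Perm (c.darts.map (·.snd)) := by
  have h : c.darts.map (·.fst) ++ [v] = v :: c.darts.map (·.snd) := by
    rw [map_fst_darts_append, cons_map_snd_darts]
  rw [← List.perm_cons v, ← h]
  exact (List.perm_append_singleton _ _).symm

lemma Walk.apply_eq_pow_length_mul {R : Type*} [Monoid R] {x : V → R} {μ : R}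
    (hx : ∀ f : G.Dart, x f.snd = μ * x f.fst) {u v : V} (p : G.Walk u v) :
    x v = μ ^ p.length * x u := by
  induction p with
  | nil => simp
  | cons h p ih =>
    rw [ih, length_cons, pow_succ, mul_assoc, ← hx ⟨(_, _), h⟩]

lemma Walk.IsCycle.exists_mem_darts_symm_notMem_darts {v : V} {c : G.Walk v v}
    (hc : c.IsCycle) : ∃ e ∈ c.darts, e.symm ∉ c.darts := by
  obtain ⟨e, he⟩ : ∃ e, e ∈ c.darts := List.exists_mem_of_ne_nil _ fun h => by
    simpa [← length_darts, h] using hc.three_le_length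
  refine ⟨e, he, fun he' => e.symm_ne ?_⟩
  exact List.inj_on_of_nodup_map hc.edges_nodup he' he e.edge_symm

section Circulation

variable [DecidableEq V] (R : Type*) [Ring R]

def Walk.circulation {v : V} (c : G.Walk v v) (e : G.Dart) : R :=
  c.darts.count e - c.darts.count e.symm

lemma Walk.IsCycle.circulation_ne_zero [Nontrivial R] {v : V} {c : G.Walk v v}
    (hc : c.IsCycle) : c.circulation R ≠ 0 := by
  obtain ⟨e, he, he'⟩ := hc.exists_mem_darts_symm_notMem_darts
  have hnodup : c.darts.Nodup := hc.edges_nodup.of_map _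
  refine Function.ne_iff.mpr ⟨e, ?_⟩
  simp [circulation, List.count_eq_one_of_mem hnodup he, List.count_eq_zero.mpr he']

end Circulation

variable [Fintype V] [DecidableRel G.Adj]

lemma Connected.exists_isCycle (hconn : G.Connected) (hdeg : ∀ v, 2 ≤ G.degree v) :
    ∃ (v : V) (c : G.Walk v v), c.IsCycle := by
  by_contra! hac
  obtain ⟨v⟩ := hconn.nonempty
  obtain ⟨w, hvw⟩ := G.degree_pos_iff_exists_adj v |>.mp (two_pos.trans_le (hdeg v))
  have : Nontrivial V := ⟨⟨v, w, hvw.ne⟩⟩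
  have h1 := IsTree.minDegree_eq_one_of_nontrivial ⟨hconn, hac⟩
  have h2 := G.le_minDegree_of_forall_le_degree 2 hdeg
  omega

variable [DecidableEq V]

lemma sum_dart_snd_eq_sum_neighborFinset {M : Type*} [AddCommMonoid M] (g : V → M) (u : V) :
    ∑ f : G.Dart with f.snd = u, g f.fst = ∑ v ∈ G.neighborFinset u, g v := by
  refine Finset.sum_bij' (fun f _ => f.fst)
    (fun v hv => ⟨(v, u), ((mem_neighborFinset G u v).mp hv).symm⟩) ?_ ?_ ?_ ?_ ?_
  · intro f hf
    rw [mem_filter] at hf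
    rw [mem_neighborFinset, ← hf.2]
    exact f.adj.symm
  · simp
  · intro f hf
    exact Dart.ext _ _ (Prod.ext rfl (mem_filter.mp hf).2.symm)
  all_goals intros; rfl

lemma sum_dart_snd_eq_sum_dart_fst_symm {M : Type*} [AddCommMonoid M] (z : G.Dart → M)
    (u : V) : ∑ f : G.Dart with f.snd = u, z f.symm = ∑ f : G.Dart with f.fst = u, z f :=
  Finset.sum_nbij' Dart.symm Dart.symm (by simp) (by simp) (by simp) (by simp) (by simp)

def IsCirculation {R : Type*} [AddCommGroup R] (z : G.Dart → R) : Prop :=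
  (∀ e, z e.symm = -z e) ∧ ∀ u, ∑ f : G.Dart with f.snd = u, z f = 0

variable {R : Type*}

lemma Walk.isCirculation_circulation [Ring R] {v : V} (c : G.Walk v v) :
    IsCirculation (c.circulation R) := by
  refine ⟨fun e => by simp [circulation], fun u => ?_⟩
  simp only [circulation, sum_sub_distrib,
    sum_dart_snd_eq_sum_dart_fst_symm (fun f => (c.darts.count f : R)), sub_eq_zero,
    ← Nat.cast_sum, sum_filter_univ_count_eq_countP]
  have := c.map_fst_darts_perm_map_snd_darts.countP_eq (fun w => decide (w = u))
  simp only [List.countP_map] at this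
  exact congrArg Nat.cast this.symm

lemma posSupport_quantumUR [Zero R] [One R] (hdeg : ∀ v, 2 ≤ G.degree v) :
    posSupport R (quantumUR G) = fun e f => if f.snd = e.fst ∧ f ≠ e.symm then 1 else 0 := by
  ext e f
  have hdeg_pos : (0 : ℝ) < G.degree f.snd := by exact_mod_cast two_pos.trans_le (hdeg f.snd)
  have hpos : 0 < (2 : ℝ) / G.degree f.snd := div_pos two_pos hdeg_pos
  have hle : (2 : ℝ) / G.degree f.snd ≤ 1 := by
    rw [div_le_one hdeg_pos]; exact_mod_cast hdeg f.snd
  unfold posSupport quantumUR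
  split_ifs <;> first | rfl | linarith

lemma posSupport_quantumUR_mulVec_apply [Ring R] (hdeg : ∀ v, 2 ≤ G.degree v)
    (y : G.Dart → R) (e : G.Dart) :
    (posSupport R (quantumUR G) *ᵥ y) e = (∑ f : G.Dart with f.snd = e.fst, y f) - y e.symm := by
  have he : e.symm ∈ ({f : G.Dart | f.snd = e.fst} : Finset G.Dart) := by simp
  rw [posSupport_quantumUR hdeg, ← sum_erase_eq_sub he, ← filter_ne', filter_filter]
  simp [mulVec, dotProduct, ite_mul, sum_filter]

lemma posSupport_quantumUR_mulVec_of_adjMatrix_mulVec [CommRing R] {k : ℕ}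
    (hreg : G.IsRegularOfDegree k) (hk : 2 ≤ k) {x : V → R} {a μ : R}
    (hx : G.adjMatrix R *ᵥ x = a • x) (hμ : μ ^ 2 - a * μ + k - 1 = 0) :
    posSupport R (quantumUR G) *ᵥ (fun f => x f.snd - μ * x f.fst)
      = μ • fun f => x f.snd - μ * x f.fst := by
  ext e
  have hsum : ∑ f : G.Dart with f.snd = e.fst, (x f.snd - μ * x f.fst)
      = ∑ v ∈ G.neighborFinset e.fst, (x e.fst - μ * x v) := by
    rw [← sum_dart_snd_eq_sum_neighborFinset]
    exact sum_congr rfl fun f hf => by rw [(mem_filter.mp hf).2]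
  have hadj := congrFun hx e.fst
  rw [adjMatrix_mulVec_apply] at hadj
  rw [posSupport_quantumUR_mulVec_apply (fun v => hreg v ▸ hk), hsum, sum_sub_distrib,
    ← mul_sum, hadj, sum_const, card_neighborFinset_eq_degree, hreg]
  simp only [Dart.symm_toProd, Prod.fst_swap, Prod.snd_swap, Pi.smul_apply, smul_eq_mul,
    nsmul_eq_mul]
  linear_combination x e.fst * hμ

lemma posSupport_quantumUR_mulVec_of_isCirculation [CommRing R] (hdeg : ∀ v, 2 ≤ G.degree v)
    {x : V → R} {μ : R} (hx : ∀ f : G.Dart, x f.snd = μ * x f.fst) {z : G.Dart → R}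
    (hz : IsCirculation z) :
    posSupport R (quantumUR G) *ᵥ (fun f => x f.fst * z f) = μ • fun f => x f.fst * z f := by
  ext e
  -- the darts into `e.fst` all start at a vertex where `x` takes the value `μ * x e.fst`
  have hsum : ∑ f : G.Dart with f.snd = e.fst, x f.fst * z f = 0 := by
    rw [← mul_zero (μ * x e.fst), ← hz.2 e.fst, mul_sum]
    refine sum_congr rfl fun f hf => ?_
    have hxf := hx f.symm
    simp only [Dart.symm_toProd, Prod.fst_swap, Prod.snd_swap] at hxf
    rw [← (mem_filter.mp hf).2, hxf, mul_assoc]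
  rw [posSupport_quantumUR_mulVec_apply hdeg, hsum, hz.1]
  simp only [Dart.symm_toProd, Prod.fst_swap, Pi.smul_apply, smul_eq_mul, hx e]
  ring

lemma mem_spectrum_posSupport_quantumUR_of_snd_eq_mul_fst (hconn : G.Connected)
    (hdeg : ∀ v, 2 ≤ G.degree v) {x : V → ℂ} (hx0 : x ≠ 0) {μ : ℂ} (hμ : μ ≠ 0)
    (hx : ∀ f : G.Dart, x f.snd = μ * x f.fst) :
    μ ∈ spectrum ℂ (posSupport ℂ (quantumUR G)) := by
  obtain ⟨v, c, hc⟩ := hconn.exists_isCycle hdeg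
  obtain ⟨e, he⟩ := Function.ne_iff.mp (hc.circulation_ne_zero ℂ)
  obtain ⟨u, hu⟩ := Function.ne_iff.mp hx0
  have hxe : x e.fst ≠ 0 := by
    rw [((hconn u e.fst).some.apply_eq_pow_length_mul hx)]
    exact mul_ne_zero (pow_ne_zero _ hμ) hu
  refine Matrix.mem_spectrum_of_mulVec_eq_smul (v := fun f => x f.fst * c.circulation ℂ f)
    (Function.ne_iff.mpr ⟨e, mul_ne_zero hxe he⟩) ?_
  exact posSupport_quantumUR_mulVec_of_isCirculation hdeg hx c.isCirculation_circulation

end SimpleGraph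

theorem stmt12 {V : Type*} [Fintype V] [DecidableEq V] (G : SimpleGraph V)
    [DecidableRel G.Adj] (hconn : G.Connected) (k : ℕ)
    (hreg : G.IsRegularOfDegree k) (hk : 2 ≤ k)
    (a : ℝ) (ha : a ∈ spectrum ℝ (G.adjMatrix ℝ))
    (lam : ℂ) (hlam : lam ^ 2 - (a : ℂ) * lam + (k : ℂ) - 1 = 0) :
    lam ∈ spectrum ℂ (posSupport ℂ (quantumUR G)) := by
  obtain ⟨x, hx0, hAx⟩ := Matrix.exists_mulVec_eq_smul_of_mem_spectrum ha
  set xc : V → ℂ := fun v => x v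
  have hxc0 : xc ≠ 0 := fun h => hx0 (funext fun v => by simpa [xc] using congrFun h v)
  have hAxc : G.adjMatrix ℂ *ᵥ xc = (a : ℂ) • xc := by
    ext u
    have := congrFun hAx u
    simp only [xc, adjMatrix_mulVec_apply, Pi.smul_apply, smul_eq_mul] at this ⊢
    exact_mod_cast this
  by_cases hy : (fun f : G.Dart => xc f.snd - lam * xc f.fst) = 0
  · have hlam0 : lam ≠ 0 := by
      rintro rfl
      norm_num [sub_eq_zero] at hlam
      exact_mod_cast (show k ≠ 1 by omega) hlam
    exact G.mem_spectrum_posSupport_quantumUR_of_snd_eq_mul_fst hconn (fun v => hreg v ▸ hk) hxc0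
      hlam0 fun f => sub_eq_zero.mp (congrFun hy f)
  · exact Matrix.mem_spectrum_of_mulVec_eq_smul hy
      (G.posSupport_quantumUR_mulVec_of_adjMatrix_mulVec hreg hk hAxc hlam)
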